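/- Let Γ=(G,σ) be a signed graph on n vertices. For 1≤k≤n let L_k (respectively L'_k) be the cut-off adjacency eigenvalues of Γ computed with edge weight and vertex measure (w,μ) (respectively (w',μ')), where w,w':E→(0,∞) and μ,μ':V→(0,∞) are arbitrary. Then #{k∈{1,…,n} : L_k=0} = #{k∈{1,…,n} : L'_k=0}. -/

import Mathlib

open Filter Topology Polynomial
open scoped Classical

noncomputable section

variable {V : Type} [Fintype V] [DecidableEq V]

/-- Sum of a (symmetric) summand over the unordered edges of `G`. -/
def sgEdgeSum (G : SimpleGraph V) (F : V → V → ℝ) : ℝ :=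
  (∑ i : V, ∑ j : V, if G.Adj i j then F i j else 0) / 2

/-- The Rayleigh quotient `R_p^σ` of the signed graph `p`-Laplacian with
edge weight `w`, signature `sgn`, vertex measure `μ` and potential `κ`. -/
def sgRayleigh (G : SimpleGraph V) (w sgn : V → V → ℝ) (μ κ : V → ℝ)
    (p : ℝ) (f : V → ℝ) : ℝ :=
  (sgEdgeSum G (fun i j => w i j * |f i - sgn i j * f j| ^ p) +
      ∑ i : V, κ i * |f i| ^ p) /
    ∑ i : V, μ i * |f i| ^ p

/-- The unit sphere `S_p` of `ℓ^p(μ)`. -/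
def pSphere (μ : V → ℝ) (p : ℝ) : Set (V → ℝ) :=
  {f | ∑ i : V, μ i * |f i| ^ p = 1}

/-- There is an odd continuous map from `B` into `ℝ^m ∖ {0}`. -/
def hasOddMapInto (B : Set (V → ℝ)) (m : ℕ) : Prop :=
  ∃ h : (V → ℝ) → (Fin m → ℝ),
    ContinuousOn h B ∧ (∀ x ∈ B, h x ≠ 0) ∧ (∀ x ∈ B, h (-x) = -(h x))

/-- The Krasnoselskii genus of `B` is at least `k`. -/
def genusGe (B : Set (V → ℝ)) (k : ℕ) : Prop :=
  ∀ m, m < k → ¬ hasOddMapInto B m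

/-- The family `F_k(S_p)` of closed symmetric subsets of the sphere `S_p`
with Krasnoselskii genus at least `k`. -/
def genusFamily (μ : V → ℝ) (p : ℝ) (k : ℕ) : Set (Set (V → ℝ)) :=
  {B | B ⊆ pSphere μ p ∧ IsClosed B ∧ (∀ x ∈ B, -x ∈ B) ∧ genusGe B k}

/-- The `k`-th variational eigenvalue `λ_k^{(p)}` of the signed graph `p`-Laplacian. -/
def varEig (G : SimpleGraph V) (w sgn : V → V → ℝ) (μ κ : V → ℝ)
    (p : ℝ) (k : ℕ) : ℝ :=
  sInf ((fun B => sSup (sgRayleigh G w sgn μ κ p '' B)) '' genusFamily μ p k)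

/-- The `k`-th smallest real root (1-indexed, counted with multiplicity) of the
characteristic polynomial of `A`; for a matrix with real spectrum this is the
`k`-th eigenvalue `λ_k(A)` in the ordering `λ_1 ≤ … ≤ λ_n`. -/
def eigval {m : Type} [Fintype m] [DecidableEq m] (A : Matrix m m ℝ) (k : ℕ) : ℝ :=
  (Multiset.sort A.charpoly.roots (· ≤ ·)).getD (k - 1) 0

/-- The normalized adjacency matrix `A^μ_{-Γ}` of the negation of the signed graph
`(H, sgn)` with edge weight `w` and vertex measure `μ`. -/
def negAdj (H : SimpleGraph V) (w sgn : V → V → ℝ) (μ : V → ℝ) : Matrix V V ℝ :=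
  fun i j => if H.Adj i j then -(sgn i j) * w i j / μ i else 0

/-- The normalized adjacency matrix `A^μ_{-Γ₀}` of the negation of the subgraph of
`(H, sgn)` with vertex set `s`, with restricted edge weight and vertex measure. -/
def negAdjSub (H : SimpleGraph V) (s : Finset V) (w sgn : V → V → ℝ) (μ : V → ℝ) :
    Matrix {x // x ∈ s} {x // x ∈ s} ℝ :=
  fun i j => if H.Adj ↑i ↑j then -(sgn ↑i ↑j) * w ↑i ↑j / μ ↑i else 0

/-- The subgraph of `G` induced on the vertex set `s`. -/
def inducedGraph (G : SimpleGraph V) (s : Finset V) : SimpleGraph {x // x ∈ s} where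
  Adj i j := G.Adj ↑i ↑j
  symm := ⟨fun _ _ h => G.adj_symm h⟩
  loopless := ⟨fun i h => G.irrefl h⟩

/-- `G` has an edge cover of cardinality `m`. -/
def edgeCoverCard {α : Type} (G : SimpleGraph α) (m : ℕ) : Prop :=
  ∃ C : Finset (Sym2 α), (C : Set (Sym2 α)) ⊆ G.edgeSet ∧
    (∀ v : α, ∃ e ∈ C, v ∈ e) ∧ C.card = m

end

/-!
Finitely many positive weights are comparable: `w ≤ A w'` on edges, `μ' ≤ B μ`, and
`|κ| ≤ C μ`, `|κ'| ≤ C' μ'`. Hence pointwise `R_{w,μ,κ} ≤ AB R_{w',μ',κ'} + (ABC' + C)`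
and `R_{w,μ,κ} ≥ -C`. Radial rescaling `f ↦ ‖f‖_{p,μ}⁻¹ f` maps the `μ'`-sphere oddly and
continuously onto the `μ`-sphere, so it carries `F_k(S_p^{μ'})` into `F_k(S_p^μ)`, and it does
not change Rayleigh quotients. So the same affine bounds hold for `λ_k^{(p)}` with constants
independent of `p`, and after multiplying by `2^{-p} → 0` they give `0 ≤ L_k ≤ AB L'_k`.
Together with the symmetric bound, `L_k = 0 ↔ L'_k = 0` for every `k`.
-/

variable {V : Type}

section Genus

variable {k : ℕ} {B : Set (V → ℝ)}

lemma nonempty_of_genusGe (hB : genusGe B k) (hk : 1 ≤ k) : B.Nonempty := by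
  refine Set.nonempty_iff_ne_empty.2 fun hempty => hB 0 hk ⟨0, ?_⟩
  simp [hempty]

lemma genusGe_image {Φ : (V → ℝ) → V → ℝ} (hB : genusGe B k) (hΦ : ContinuousOn Φ B)
    (hodd : ∀ f, Φ (-f) = -Φ f) : genusGe (Φ '' B) k := by
  rintro m hm ⟨h, hcont, hne, hsymm⟩
  refine hB m hm ⟨h ∘ Φ, hcont.comp hΦ (Set.mapsTo_image Φ B),
    fun f hf => hne _ (Set.mem_image_of_mem Φ hf), fun f hf => ?_⟩
  rw [Function.comp_apply, hodd, hsymm _ (Set.mem_image_of_mem Φ hf), Function.comp_apply]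

end Genus

variable [Fintype V]

noncomputable def pMass (μ : V → ℝ) (p : ℝ) (f : V → ℝ) : ℝ :=
  ∑ i : V, μ i * |f i| ^ p

noncomputable def sgEnergy (G : SimpleGraph V) (w sgn : V → V → ℝ) (p : ℝ) (f : V → ℝ) : ℝ :=
  sgEdgeSum G (fun i j => w i j * |f i - sgn i j * f j| ^ p)

noncomputable def sphereProj (μ : V → ℝ) (p : ℝ) (f : V → ℝ) : V → ℝ :=
  pMass μ p f ^ (-p⁻¹) • f

section EdgeSum

variable {G : SimpleGraph V} {F F' : V → V → ℝ}

lemma sgEdgeSum_nonneg (h : ∀ i j, G.Adj i j → 0 ≤ F i j) : 0 ≤ sgEdgeSum G F := by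
  refine div_nonneg (Finset.sum_nonneg fun i _ => Finset.sum_nonneg fun j _ => ?_) zero_le_two
  split_ifs with hij
  exacts [h i j hij, le_rfl]

lemma sgEdgeSum_mono (h : ∀ i j, G.Adj i j → F i j ≤ F' i j) :
    sgEdgeSum G F ≤ sgEdgeSum G F' := by
  refine div_le_div_of_nonneg_right
    (Finset.sum_le_sum fun i _ => Finset.sum_le_sum fun j _ => ?_) zero_le_two
  split_ifs with hij
  exacts [h i j hij, le_rfl]

lemma sgEdgeSum_const_mul (c : ℝ) :
    sgEdgeSum G (fun i j => c * F i j) = c * sgEdgeSum G F := by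
  simp only [sgEdgeSum, mul_div_assoc', Finset.mul_sum, mul_ite, mul_zero]

lemma continuous_sgEdgeSum {X : Type*} [TopologicalSpace X] {F : X → V → V → ℝ}
    (hF : ∀ i j, Continuous fun x => F x i j) : Continuous fun x => sgEdgeSum G (F x) := by
  refine Continuous.div_const (continuous_finsetSum _ fun i _ =>
    continuous_finsetSum _ fun j _ => ?_) 2
  split_ifs
  exacts [hF i j, continuous_const]

end EdgeSum

section Rayleigh

variable {G : SimpleGraph V} {w w' sgn : V → V → ℝ} {μ μ' κ κ' : V → ℝ} {p : ℝ}
  {f : V → ℝ}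

lemma sgRayleigh_eq :
    sgRayleigh G w sgn μ κ p f = (sgEnergy G w sgn p f + pMass κ p f) / pMass μ p f :=
  rfl

lemma mem_pSphere : f ∈ pSphere μ p ↔ pMass μ p f = 1 :=
  Iff.rfl

lemma pMass_le_mul {B : ℝ} (h : ∀ i, μ' i ≤ B * μ i) : pMass μ' p f ≤ B * pMass μ p f := by
  rw [pMass, pMass, Finset.mul_sum]
  refine Finset.sum_le_sum fun i _ => ?_
  rw [← mul_assoc]
  gcongr
  exact h i

lemma abs_pMass_le {C : ℝ} (h : ∀ i, |κ i| ≤ C * μ i) : |pMass κ p f| ≤ C * pMass μ p f :=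
  calc |pMass κ p f| ≤ pMass (fun i => |κ i|) p f := by
        refine (Finset.abs_sum_le_sum_abs _ _).trans_eq (Finset.sum_congr rfl fun i _ => ?_)
        rw [abs_mul, abs_of_nonneg (by positivity : (0 : ℝ) ≤ |f i| ^ p)]
    _ ≤ C * pMass μ p f := pMass_le_mul h

lemma pMass_smul (c : ℝ) : pMass μ p (c • f) = |c| ^ p * pMass μ p f := by
  rw [pMass, pMass, Finset.mul_sum]
  refine Finset.sum_congr rfl fun i _ => ?_
  rw [Pi.smul_apply, smul_eq_mul, abs_mul, Real.mul_rpow (abs_nonneg _) (abs_nonneg _)]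
  ring

lemma pMass_neg : pMass μ p (-f) = pMass μ p f := by
  simp only [pMass, Pi.neg_apply, abs_neg]

lemma pMass_pos_of_mem_pSphere (hμ : ∀ i, 0 < μ i) (hf : f ∈ pSphere μ' p) :
    0 < pMass μ p f := by
  have hmass : pMass μ' p f ≠ 0 := by
    rw [mem_pSphere.1 hf]
    exact one_ne_zero
  obtain ⟨i, -, hi⟩ := Finset.exists_ne_zero_of_sum_ne_zero hmass
  have hfi : 0 < |f i| ^ p :=
    (Real.rpow_nonneg (abs_nonneg _) p).lt_of_ne' (right_ne_zero_of_mul hi)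
  exact Finset.sum_pos' (fun j _ => by have := hμ j; positivity)
    ⟨i, Finset.mem_univ i, mul_pos (hμ i) hfi⟩

lemma continuous_pMass (hp : 0 ≤ p) : Continuous (pMass μ p) :=
  continuous_finsetSum _ fun i _ =>
    continuous_const.mul ((continuous_apply i).abs.rpow_const fun _ => Or.inr hp)

lemma sgEnergy_nonneg (hw : ∀ i j, G.Adj i j → 0 ≤ w i j) : 0 ≤ sgEnergy G w sgn p f :=
  sgEdgeSum_nonneg fun i j hij => mul_nonneg (hw i j hij) (by positivity)

lemma sgEnergy_le_mul {A : ℝ} (hwA : ∀ i j, G.Adj i j → w i j ≤ A * w' i j) :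
    sgEnergy G w sgn p f ≤ A * sgEnergy G w' sgn p f := by
  rw [sgEnergy, sgEnergy, ← sgEdgeSum_const_mul]
  refine sgEdgeSum_mono fun i j hij => ?_
  rw [← mul_assoc]
  gcongr
  exact hwA i j hij

lemma sgEnergy_smul (c : ℝ) : sgEnergy G w sgn p (c • f) = |c| ^ p * sgEnergy G w sgn p f := by
  rw [sgEnergy, sgEnergy, ← sgEdgeSum_const_mul]
  congr 1
  funext i j
  have hfactor : (c • f) i - sgn i j * (c • f) j = c * (f i - sgn i j * f j) := by
    simp only [Pi.smul_apply, smul_eq_mul]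
    ring
  rw [hfactor, abs_mul, Real.mul_rpow (abs_nonneg _) (abs_nonneg _)]
  ring

lemma continuous_sgEnergy (hp : 0 ≤ p) : Continuous (sgEnergy G w sgn p) :=
  continuous_sgEdgeSum fun i j => continuous_const.mul
    (((continuous_apply i).sub (continuous_const.mul (continuous_apply j))).abs.rpow_const
      fun _ => Or.inr hp)

lemma continuousOn_sgRayleigh (hp : 0 ≤ p) :
    ContinuousOn (sgRayleigh G w sgn μ κ p) {f | pMass μ p f ≠ 0} :=
  ((continuous_sgEnergy hp).add (continuous_pMass hp)).continuousOn.div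
    (continuous_pMass hp).continuousOn fun _ hf => hf

lemma sgRayleigh_smul {c : ℝ} (hc : c ≠ 0) (f : V → ℝ) :
    sgRayleigh G w sgn μ κ p (c • f) = sgRayleigh G w sgn μ κ p f := by
  have hcp : |c| ^ p ≠ 0 := (Real.rpow_pos_of_pos (abs_pos.2 hc) p).ne'
  rw [sgRayleigh_eq, sgRayleigh_eq, sgEnergy_smul, pMass_smul, pMass_smul, ← mul_add,
    mul_div_mul_left _ _ hcp]

lemma neg_le_sgRayleigh {C : ℝ} (hw : ∀ i j, G.Adj i j → 0 ≤ w i j)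
    (hκ : ∀ i, |κ i| ≤ C * μ i) (hf : 0 < pMass μ p f) :
    -C ≤ sgRayleigh G w sgn μ κ p f := by
  rw [sgRayleigh_eq, le_div_iff₀ hf]
  linarith [sgEnergy_nonneg (sgn := sgn) (p := p) (f := f) hw, abs_pMass_le (p := p) (f := f) hκ,
    neg_abs_le (pMass κ p f)]

lemma sgRayleigh_le {A B C C' : ℝ} (hw' : ∀ i j, G.Adj i j → 0 ≤ w' i j) (hA : 0 ≤ A)
    (hwA : ∀ i j, G.Adj i j → w i j ≤ A * w' i j) (hB : 0 ≤ B) (hμB : ∀ i, μ' i ≤ B * μ i)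
    (hκ : ∀ i, |κ i| ≤ C * μ i) (hκ' : ∀ i, |κ' i| ≤ C' * μ' i) (hf : 0 < pMass μ' p f) :
    sgRayleigh G w sgn μ κ p f ≤
      A * B * sgRayleigh G w' sgn μ' κ' p f + (A * B * C' + C) := by
  set E := sgEnergy G w sgn p f
  set E' := sgEnergy G w' sgn p f
  set D := pMass μ p f
  set D' := pMass μ' p f
  have hDD' : D' ≤ B * D := pMass_le_mul hμB
  have hD : 0 < D := pos_of_mul_pos_right (hf.trans_le hDD') hB
  have hE' : 0 ≤ E' := sgEnergy_nonneg hw'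
  have hpot : pMass κ p f / D ≤ C := by
    rw [div_le_iff₀ hD]
    exact (le_abs_self _).trans (abs_pMass_le hκ)
  have hpot' : -C' ≤ pMass κ' p f / D' := by
    rw [le_div_iff₀ hf]
    linarith [neg_abs_le (pMass κ' p f), abs_pMass_le (p := p) (f := f) hκ']
  have henergy : E / D ≤ A * B * (E' / D') := by
    rw [div_le_iff₀ hD]
    calc E ≤ A * E' := sgEnergy_le_mul hwA
      _ = A * (E' / D' * D') := by rw [div_mul_cancel₀ _ hf.ne']
      _ ≤ A * (E' / D' * (B * D)) := by gcongr
      _ = A * B * (E' / D') * D := by ring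
  rw [sgRayleigh_eq, sgRayleigh_eq, add_div, add_div]
  linarith [mul_le_mul_of_nonneg_left hpot' (mul_nonneg hA hB)]

end Rayleigh

section Sphere

variable {μ μ' : V → ℝ} {p : ℝ} {k : ℕ} {B : Set (V → ℝ)}

lemma isBounded_pSphere (hp : 0 < p) (hμ : ∀ i, 0 < μ i) :
    Bornology.IsBounded (pSphere μ p) := by
  have hbound : ∀ i, 0 ≤ (1 / μ i) ^ p⁻¹ := fun i => by have := hμ i; positivity
  refine isBounded_iff_forall_norm_le.2 ⟨∑ i, (1 / μ i) ^ p⁻¹, fun f hf => ?_⟩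
  refine (pi_norm_le_iff_of_nonneg (Finset.sum_nonneg fun i _ => hbound i)).2 fun i => ?_
  have hterm : μ i * |f i| ^ p ≤ 1 := by
    rw [← mem_pSphere.1 hf]
    exact Finset.single_le_sum (f := fun j => μ j * |f j| ^ p)
      (fun j _ => by have := hμ j; positivity) (Finset.mem_univ i)
  calc ‖f i‖ = (|f i| ^ p) ^ p⁻¹ := (Real.rpow_rpow_inv (abs_nonneg _) hp.ne').symm
    _ ≤ (1 / μ i) ^ p⁻¹ := by
        gcongr
        exact (le_div_iff₀' (hμ i)).2 hterm
    _ ≤ ∑ j, (1 / μ j) ^ p⁻¹ := Finset.single_le_sum (fun j _ => hbound j) (Finset.mem_univ i)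

lemma isCompact_of_mem_genusFamily (hp : 0 < p) (hμ : ∀ i, 0 < μ i)
    (hB : B ∈ genusFamily μ p k) : IsCompact B :=
  Metric.isCompact_of_isClosed_isBounded hB.2.1 ((isBounded_pSphere hp hμ).subset hB.1)

lemma sphereProj_mem_pSphere {f : V → ℝ} (hp : p ≠ 0) (hf : 0 < pMass μ p f) :
    sphereProj μ p f ∈ pSphere μ p := by
  rw [mem_pSphere, sphereProj, pMass_smul, abs_of_pos (Real.rpow_pos_of_pos hf _),
    ← Real.rpow_mul hf.le, neg_mul, inv_mul_cancel₀ hp, Real.rpow_neg_one, inv_mul_cancel₀ hf.ne']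

lemma sphereProj_neg (f : V → ℝ) : sphereProj μ p (-f) = -sphereProj μ p f := by
  rw [sphereProj, sphereProj, pMass_neg, smul_neg]

lemma continuousOn_sphereProj (hp : 0 ≤ p) : ContinuousOn (sphereProj μ p) {f | 0 < pMass μ p f} :=
  ContinuousOn.smul (fun _ hf => ((continuous_pMass hp).continuousAt.rpow_const
    (Or.inl (ne_of_gt hf))).continuousWithinAt) continuousOn_id

lemma sgRayleigh_sphereProj {G : SimpleGraph V} {w sgn : V → V → ℝ} {ν κ : V → ℝ} {q : ℝ}
    {f : V → ℝ} (hf : 0 < pMass μ p f) :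
    sgRayleigh G w sgn ν κ q (sphereProj μ p f) = sgRayleigh G w sgn ν κ q f :=
  sgRayleigh_smul (Real.rpow_pos_of_pos hf _).ne' f

lemma image_sphereProj_mem_genusFamily (hp : 0 < p) (hμ : ∀ i, 0 < μ i) (hμ' : ∀ i, 0 < μ' i)
    (hB : B ∈ genusFamily μ' p k) : sphereProj μ p '' B ∈ genusFamily μ p k := by
  obtain ⟨hsphere, hclosed, hsymm, hgenus⟩ := hB
  have hpos : B ⊆ {f | 0 < pMass μ p f} := fun f hf => pMass_pos_of_mem_pSphere hμ (hsphere hf)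
  have hcont := (continuousOn_sphereProj hp.le).mono hpos
  refine ⟨Set.image_subset_iff.2 fun f hf => sphereProj_mem_pSphere hp.ne' (hpos hf),
    ((isCompact_of_mem_genusFamily hp hμ' ⟨hsphere, hclosed, hsymm, hgenus⟩).image_of_continuousOn
      hcont).isClosed, ?_, genusGe_image hgenus hcont sphereProj_neg⟩
  rintro _ ⟨f, hf, rfl⟩
  exact ⟨-f, hsymm f hf, sphereProj_neg f⟩

end Sphere

lemma csSup_image_le_mul_add {ι : Type*} {s : Set ι} {f g : ι → ℝ} {M c : ℝ} (hs : s.Nonempty)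
    (hg : BddAbove (g '' s)) (hM : 0 ≤ M) (h : ∀ x ∈ s, f x ≤ M * g x + c) :
    sSup (f '' s) ≤ M * sSup (g '' s) + c :=
  csSup_le (hs.image f) <| Set.forall_mem_image.2 fun x hx =>
    (h x hx).trans <| by gcongr; exact le_csSup hg (Set.mem_image_of_mem g hx)

lemma csInf_image_le_mul_add {ι : Type*} {s t : Set ι} {f g : ι → ℝ} {M c : ℝ}
    (ht : t.Nonempty) (hf : BddBelow (f '' s)) (hM : 0 < M)
    (h : ∀ y ∈ t, ∃ x ∈ s, f x ≤ M * g y + c) :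
    sInf (f '' s) ≤ M * sInf (g '' t) + c := by
  have key : (sInf (f '' s) - c) / M ≤ sInf (g '' t) :=
    le_csInf (ht.image g) <| Set.forall_mem_image.2 fun y hy => by
      obtain ⟨x, hx, hxy⟩ := h y hy
      rw [div_le_iff₀' hM]
      linarith [csInf_le hf (Set.mem_image_of_mem f hx)]
  rw [div_le_iff₀' hM] at key
  linarith

section VarEig

variable {G : SimpleGraph V} {w w' sgn : V → V → ℝ} {μ μ' κ κ' : V → ℝ} {p : ℝ} {k : ℕ}

lemma bddAbove_sgRayleigh_image (hp : 0 < p) (hμ : ∀ i, 0 < μ i) {B : Set (V → ℝ)}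
    (hB : B ∈ genusFamily μ p k) : BddAbove (sgRayleigh G w sgn μ κ p '' B) := by
  have hmass : B ⊆ {f | pMass μ p f ≠ 0} := fun f hf => by
    show pMass μ p f ≠ 0
    rw [mem_pSphere.1 (hB.1 hf)]
    exact one_ne_zero
  exact ((isCompact_of_mem_genusFamily hp hμ hB).image_of_continuousOn
    ((continuousOn_sgRayleigh hp.le).mono hmass)).bddAbove

lemma neg_le_sSup_sgRayleigh_image {C : ℝ} (hp : 0 < p) (hk : 1 ≤ k) (hμ : ∀ i, 0 < μ i)
    (hw : ∀ i j, G.Adj i j → 0 ≤ w i j) (hκ : ∀ i, |κ i| ≤ C * μ i) {B : Set (V → ℝ)}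
    (hB : B ∈ genusFamily μ p k) : -C ≤ sSup (sgRayleigh G w sgn μ κ p '' B) := by
  obtain ⟨f, hf⟩ := nonempty_of_genusGe hB.2.2.2 hk
  exact (neg_le_sgRayleigh hw hκ (pMass_pos_of_mem_pSphere hμ (hB.1 hf))).trans
    (le_csSup (bddAbove_sgRayleigh_image hp hμ hB) (Set.mem_image_of_mem _ hf))

lemma neg_le_varEig {C : ℝ} (hp : 0 < p) (hk : 1 ≤ k) (hC : 0 ≤ C) (hμ : ∀ i, 0 < μ i)
    (hw : ∀ i j, G.Adj i j → 0 ≤ w i j) (hκ : ∀ i, |κ i| ≤ C * μ i) :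
    -C ≤ varEig G w sgn μ κ p k := by
  rcases (genusFamily μ p k).eq_empty_or_nonempty with hempty | hne
  · simpa [varEig, hempty] using hC
  · exact le_csInf (hne.image _) <| Set.forall_mem_image.2 fun B hB =>
      neg_le_sSup_sgRayleigh_image hp hk hμ hw hκ hB

lemma varEig_le {A B C C' : ℝ} (hp : 0 < p) (hk : 1 ≤ k) (hμ : ∀ i, 0 < μ i)
    (hμ' : ∀ i, 0 < μ' i) (hw : ∀ i j, G.Adj i j → 0 ≤ w i j)
    (hw' : ∀ i j, G.Adj i j → 0 ≤ w' i j) (hA : 0 < A)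
    (hwA : ∀ i j, G.Adj i j → w i j ≤ A * w' i j) (hB : 0 < B) (hμB : ∀ i, μ' i ≤ B * μ i)
    (hC : 0 ≤ C) (hC' : 0 ≤ C') (hκ : ∀ i, |κ i| ≤ C * μ i) (hκ' : ∀ i, |κ' i| ≤ C' * μ' i) :
    varEig G w sgn μ κ p k ≤ A * B * varEig G w' sgn μ' κ' p k + (A * B * C' + C) := by
  rcases (genusFamily μ' p k).eq_empty_or_nonempty with hempty | hne
  -- `sInf ∅ = 0`: then both families are empty, since the projection maps one into the other.
  · have hempty' : genusFamily μ p k = ∅ := Set.eq_empty_of_forall_notMem fun B hB => by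
      simpa [hempty] using image_sphereProj_mem_genusFamily hp hμ' hμ hB
    simp only [varEig, hempty, hempty', Set.image_empty, Real.sInf_empty, mul_zero, zero_add]
    positivity
  refine csInf_image_le_mul_add hne ⟨-C, Set.forall_mem_image.2 fun B hB =>
    neg_le_sSup_sgRayleigh_image hp hk hμ hw hκ hB⟩ (by positivity) fun B' hB' =>
    ⟨sphereProj μ p '' B', image_sphereProj_mem_genusFamily hp hμ hμ' hB', ?_⟩
  rw [Set.image_image, Set.image_congr fun f hf =>
    sgRayleigh_sphereProj (pMass_pos_of_mem_pSphere hμ (hB'.1 hf))]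
  exact csSup_image_le_mul_add (nonempty_of_genusGe hB'.2.2.2 hk)
    (bddAbove_sgRayleigh_image hp hμ' hB') (by positivity) fun f hf =>
    sgRayleigh_le hw' hA.le hwA hB.le hμB hκ hκ' (pMass_pos_of_mem_pSphere hμ' (hB'.1 hf))

end VarEig

lemma exists_pos_forall_le_mul {ι : Type*} [Finite ι] (f g : ι → ℝ) (hg : ∀ i, 0 < g i) :
    ∃ A, 0 < A ∧ ∀ i, f i ≤ A * g i := by
  obtain ⟨A, hA⟩ := Finite.bddAbove_range fun i => f i / g i
  refine ⟨max A 1, by positivity, fun i => ?_⟩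
  rw [← div_le_iff₀ (hg i)]
  exact (hA (Set.mem_range_self i)).trans (le_max_left A 1)

lemma tendsto_two_rpow_neg_atTop : Tendsto (fun p : ℝ => (2 : ℝ) ^ (-p)) atTop (𝓝 0) :=
  (tendsto_rpow_atBot_of_base_gt_one 2 one_lt_two).comp tendsto_neg_atTop_atBot

lemma le_mul_of_tendsto_of_le_mul_add {α : Type*} {l : Filter α} [l.NeBot] {s f g : α → ℝ}
    {a b M c : ℝ} (hs : Tendsto s l (𝓝 0)) (hs0 : ∀ᶠ x in l, 0 ≤ s x)
    (hf : Tendsto (fun x => s x * f x) l (𝓝 a)) (hg : Tendsto (fun x => s x * g x) l (𝓝 b))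
    (h : ∀ᶠ x in l, f x ≤ M * g x + c) : a ≤ M * b := by
  have hlim : Tendsto (fun x => M * (s x * g x) + c * s x) l (𝓝 (M * b)) := by
    simpa using (hg.const_mul M).add (hs.const_mul c)
  refine le_of_tendsto_of_tendsto hf hlim ?_
  filter_upwards [hs0, h] with x hsx hx
  linarith [mul_le_mul_of_nonneg_left hx hsx]

section Cutoff

variable {G : SimpleGraph V} {w w' sgn : V → V → ℝ} {μ μ' κ κ' : V → ℝ} {k : ℕ}

lemma cutoff_nonneg {l : ℝ} (hk : 1 ≤ k) (hμ : ∀ i, 0 < μ i)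
    (hw : ∀ i j, G.Adj i j → 0 ≤ w i j)
    (hl : Tendsto (fun p : ℝ => (2 : ℝ) ^ (-p) * varEig G w sgn μ κ p k) atTop (𝓝 l)) :
    0 ≤ l := by
  obtain ⟨C, hC, hκ⟩ := exists_pos_forall_le_mul (fun i => |κ i|) μ hμ
  have hzero : Tendsto (fun p : ℝ => (2 : ℝ) ^ (-p) * 0) atTop (𝓝 0) := by
    simp
  simpa using le_mul_of_tendsto_of_le_mul_add (M := 1) (c := C) tendsto_two_rpow_neg_atTop
    (Eventually.of_forall fun p => by positivity) hzero hl
    ((eventually_gt_atTop 0).mono fun p hp => by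
      linarith [neg_le_varEig (sgn := sgn) hp hk hC.le hμ hw hκ])

lemma exists_cutoff_le_mul (hμ : ∀ i, 0 < μ i) (hμ' : ∀ i, 0 < μ' i)
    (hw : ∀ i j, G.Adj i j → 0 ≤ w i j) (hw' : ∀ i j, G.Adj i j → 0 < w' i j) :
    ∃ M, ∀ k, 1 ≤ k → ∀ l l' : ℝ,
      Tendsto (fun p : ℝ => (2 : ℝ) ^ (-p) * varEig G w sgn μ κ p k) atTop (𝓝 l) →
      Tendsto (fun p : ℝ => (2 : ℝ) ^ (-p) * varEig G w' sgn μ' κ' p k) atTop (𝓝 l') →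
      l ≤ M * l' := by
  obtain ⟨A, hA, hwA⟩ := exists_pos_forall_le_mul (fun e : {e : V × V // G.Adj e.1 e.2} =>
    w e.1.1 e.1.2) (fun e => w' e.1.1 e.1.2) fun e => hw' _ _ e.2
  obtain ⟨B, hB, hμB⟩ := exists_pos_forall_le_mul μ' μ hμ
  obtain ⟨C, hC, hκ⟩ := exists_pos_forall_le_mul (fun i => |κ i|) μ hμ
  obtain ⟨C', hC', hκ'⟩ := exists_pos_forall_le_mul (fun i => |κ' i|) μ' hμ'
  refine ⟨A * B, fun k hk l l' hl hl' => le_mul_of_tendsto_of_le_mul_add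
    (c := A * B * C' + C) tendsto_two_rpow_neg_atTop
    (Eventually.of_forall fun p => by positivity) hl hl'
    ((eventually_gt_atTop 0).mono fun p hp => ?_)⟩
  exact varEig_le hp hk hμ hμ' hw (fun i j h => (hw' i j h).le) hA (fun i j h => hwA ⟨(i, j), h⟩)
    hB hμB hC.le hC'.le hκ hκ'

end Cutoff

theorem zero_cutoff_count_independent_of_weight_measure_general
    {V : Type} [Fintype V] (n : ℕ)
    (G : SimpleGraph V) (sgn : V → V → ℝ)
    (w w' : V → V → ℝ) (μ μ' κ κ' : V → ℝ)
    (hw : ∀ i j, G.Adj i j → 0 < w i j)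
    (hw' : ∀ i j, G.Adj i j → 0 < w' i j)
    (hμ : ∀ i, 0 < μ i) (hμ' : ∀ i, 0 < μ' i)
    (L L' : ℕ → ℝ)
    (hL : ∀ k, 1 ≤ k → k ≤ n →
      Tendsto (fun p : ℝ => (2 : ℝ) ^ (-p) * varEig G w sgn μ κ p k) atTop (𝓝 (L k)))
    (hL' : ∀ k, 1 ≤ k → k ≤ n →
      Tendsto (fun p : ℝ => (2 : ℝ) ^ (-p) * varEig G w' sgn μ' κ' p k) atTop (𝓝 (L' k))) :
    ((Finset.Icc 1 n).filter (fun k => L k = 0)).card =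
      ((Finset.Icc 1 n).filter (fun k => L' k = 0)).card := by
  have hw₀ : ∀ i j, G.Adj i j → 0 ≤ w i j := fun i j h => (hw i j h).le
  have hw₀' : ∀ i j, G.Adj i j → 0 ≤ w' i j := fun i j h => (hw' i j h).le
  obtain ⟨M, hM⟩ := exists_cutoff_le_mul (sgn := sgn) (κ := κ) (κ' := κ') hμ hμ' hw₀ hw'
  obtain ⟨M', hM'⟩ := exists_cutoff_le_mul (sgn := sgn) (κ := κ') (κ' := κ) hμ' hμ hw₀' hw
  refine congrArg Finset.card (Finset.filter_congr fun k hk => ?_)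
  obtain ⟨hk, hkn⟩ := Finset.mem_Icc.1 hk
  have hnonneg := cutoff_nonneg hk hμ hw₀ (hL k hk hkn)
  have hnonneg' := cutoff_nonneg hk hμ' hw₀' (hL' k hk hkn)
  have hle := hM k hk _ _ (hL k hk hkn) (hL' k hk hkn)
  have hle' := hM' k hk _ _ (hL' k hk hkn) (hL k hk hkn)
  constructor
  · intro h
    rw [h, mul_zero] at hle'
    linarith
  · intro h
    rw [h, mul_zero] at hle
    linarith

/-- **Independence of the zero count from weights and measures**
(Proposition `pro:weight and measure`). The number of zero cut-off adjacency
eigenvalues of a signed graph does not depend on the edge weight and vertex measure. -/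
theorem zero_cutoff_count_independent_of_weight_measure
    {V : Type} [Fintype V] [DecidableEq V] (n : ℕ) (hn : Fintype.card V = n)
    (G : SimpleGraph V) (sgn : V → V → ℝ)
    (hsgn : ∀ i j, G.Adj i j → sgn i j = 1 ∨ sgn i j = -1)
    (hsgnsymm : ∀ i j, sgn i j = sgn j i)
    (w w' : V → V → ℝ) (μ μ' κ κ' : V → ℝ)
    (hw : ∀ i j, G.Adj i j → 0 < w i j) (hwsymm : ∀ i j, w i j = w j i)
    (hw' : ∀ i j, G.Adj i j → 0 < w' i j) (hw'symm : ∀ i j, w' i j = w' j i)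
    (hμ : ∀ i, 0 < μ i) (hμ' : ∀ i, 0 < μ' i)
    (L L' : ℕ → ℝ)
    (hL : ∀ k, 1 ≤ k → k ≤ n →
      Tendsto (fun p : ℝ => (2 : ℝ) ^ (-p) * varEig G w sgn μ κ p k) atTop (𝓝 (L k)))
    (hL' : ∀ k, 1 ≤ k → k ≤ n →
      Tendsto (fun p : ℝ => (2 : ℝ) ^ (-p) * varEig G w' sgn μ' κ' p k) atTop (𝓝 (L' k))) :
    ((Finset.Icc 1 n).filter (fun k => L k = 0)).card =
      ((Finset.Icc 1 n).filter (fun k => L' k = 0)).card :=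
  zero_cutoff_count_independent_of_weight_measure_general n G sgn w w' μ μ' κ κ' hw hw' hμ hμ' L L'
    hL hL'
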